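/- For every assignment α : {1,…,n} → {true,false} and every clause index j ∈ {1,…,m}: there exists a directed s-t path in G_φ that follows α and has total cost 0 under c^j if and only if α satisfies clause C_j. -/

import Mathlib

/-- Vertices of the graph `G_φ`: source `s`, sink `t`, and for each variable index
`i ∈ {1,…,n}` the four vertices `tᵢ¹, tᵢ², fᵢ¹, fᵢ²`.  Here `Vtx.mid i second isTrue`
is `tᵢ` if `isTrue = true`, `fᵢ` if `isTrue = false`; superscript `2` iff `second = true`. -/
inductive Vtx (n : ℕ) : Type where
  | s : Vtx n
  | t : Vtx n
  | mid (i : Fin n) (second : Bool) (isTrue : Bool) : Vtx n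
deriving DecidableEq

/-- The directed edges of `G_φ`. -/
def GEdge (n : ℕ) : Vtx n → Vtx n → Prop :=
  fun a b =>
    match a, b with
    | .s, .mid i false _ => (i : ℕ) = 0
    | .mid i false _, .mid j false _ => (j : ℕ) = (i : ℕ) + 1
    | .mid i true _, .mid j true _ => (j : ℕ) = (i : ℕ) + 1
    | .mid i false v, .mid j true w => j = i ∧ w = v
    | .mid i true _, .t => (i : ℕ) = n - 1
    | _, _ => False

/-- The edge costs `c^j` determined by a clause `C` (a set of literals `(i, ε)`):
a bridge edge `(tᵢ¹,tᵢ²)` (resp. `(fᵢ¹,fᵢ²)`) costs `0` if `(i,true) ∈ C`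
(resp. `(i,false) ∈ C`) and `1` otherwise; all non-bridge edges cost `0`. -/
def cost (n : ℕ) (C : Finset (Fin n × Bool)) : Vtx n → Vtx n → ℕ
  | .mid i false v, .mid j true w =>
      if j = i ∧ w = v then (if (i, v) ∈ C then 0 else 1) else 0
  | _, _ => 0

/-- The cost of a path (list of vertices) under the scenario of clause `C`:
the sum of the edge costs over consecutive pairs. -/
def pathCost (n : ℕ) (C : Finset (Fin n × Bool)) (P : List (Vtx n)) : ℕ :=
  ((P.zip P.tail).map fun q => cost n C q.1 q.2).sum

/-- A directed `s`-`t` path in `G_φ`: consecutive pairs are edges, vertices are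
pairwise distinct, the first vertex is `s` and the last is `t`. -/
def isSTPath (n : ℕ) (P : List (Vtx n)) : Prop :=
  P.Chain' (GEdge n) ∧ P.Nodup ∧ P.head? = some Vtx.s ∧ P.getLast? = some Vtx.t

/-- A path follows the assignment `α` if for every index `i`, each of its vertices with
index `i` is a `t`-vertex when `α i = true` and an `f`-vertex when `α i = false`. -/
def follows (n : ℕ) (α : Fin n → Bool) (P : List (Vtx n)) : Prop :=
  ∀ (i : Fin n) (second v : Bool), Vtx.mid i second v ∈ P → v = α i

/-- The assignment `α` satisfies the clause `C` if it makes some literal of `C` true. -/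
def satisfiesClause (n : ℕ) (α : Fin n → Bool) (C : Finset (Fin n × Bool)) : Prop :=
  ∃ l ∈ C, α l.1 = l.2


/-! An `s`-`t` path starts in the lower layer (`s` and the superscript-1 vertices) and ends in the
upper one (`t` and the superscript-2 vertices), so it uses a bridge edge, and bridges are the only
edges that can cost anything. A path following `α` can only use the bridge of the literal
`(i, α i)`, which is free exactly when that literal lies in the clause. Conversely, if
`(i, α i) ∈ C`, the path following `α` along the lower layer up to index `i`, crossing there
and following `α` along the upper layer, is an `s`-`t` path of cost `0`. -/

theorem List.IsChain.exists_crossing_pair {α : Type*} {R : α → α → Prop} {p : α → Prop} :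
    ∀ {l : List α} {a b : α}, l.IsChain R → l.head? = some a → l.getLast? = some b →
      ¬ p a → p b → ∃ x y, (x, y) ∈ l.zip l.tail ∧ R x y ∧ ¬ p x ∧ p y
  | [], _, _, _, ha, _, _, _ => by simp at ha
  | [_], _, _, _, ha, hb, hpa, hpb => by simp_all
  | x :: y :: l, a, b, hl, ha, hb, hpa, hpb => by
    obtain rfl : x = a := by simpa using ha
    obtain ⟨hxy, hl⟩ := List.isChain_cons_cons.mp hl
    by_cases hpy : p y
    · exact ⟨x, y, by simp, hxy, hpa, hpy⟩
    · obtain ⟨u, v, huv, h⟩ := hl.exists_crossing_pair rfl (by simpa using hb) hpy hpb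
      exact ⟨u, v, List.mem_cons_of_mem _ huv, h⟩

variable {n : ℕ}

theorem List.isChain_finRange (n : ℕ) :
    (List.finRange n).IsChain (fun a b : Fin n => (b : ℕ) = a + 1) := by
  rw [List.isChain_iff_getElem]
  simp

theorem List.mem_take_finRange {i : ℕ} {k : Fin n} :
    k ∈ (List.finRange n).take i ↔ (k : ℕ) < i := by
  simp [List.mem_take_iff_getElem, Fin.ext_iff]

theorem List.mem_drop_finRange {i : ℕ} {k : Fin n} : k ∈ (List.finRange n).drop i ↔ i ≤ k := by
  simp only [List.mem_drop_iff_getElem, List.getElem_finRange, Fin.ext_iff, List.length_finRange,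
    Fin.val_cast]
  exact ⟨fun ⟨j, _, h⟩ => h ▸ Nat.le_add_right i j, fun _ => ⟨k - i, by omega, by omega⟩⟩

theorem cost_eq_zero_iff {C : Finset (Fin n × Bool)} {a b : Vtx n} :
    cost n C a b = 0 ↔ ∀ i v, a = .mid i false v → b = .mid i true v → (i, v) ∈ C := by
  rcases a with _ | _ | ⟨i, _ | _, v⟩ <;> rcases b with _ | _ | ⟨j, _ | _, w⟩ <;> simp [cost]

theorem pathCost_eq_zero_iff {C : Finset (Fin n × Bool)} {P : List (Vtx n)} :
    pathCost n C P = 0 ↔ ∀ a b, (a, b) ∈ P.zip P.tail → cost n C a b = 0 := by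
  simp only [pathCost, List.sum_eq_zero_iff, List.mem_map, Prod.exists]
  aesop

def Vtx.IsUpper : Vtx n → Prop
  | .s => False
  | .t => True
  | .mid _ second _ => second = true

theorem GEdge.eq_bridge_of_not_isUpper_of_isUpper {a b : Vtx n} (h : GEdge n a b)
    (ha : ¬ a.IsUpper) (hb : b.IsUpper) : ∃ i v, a = .mid i false v ∧ b = .mid i true v := by
  rcases a with _ | _ | ⟨i, _ | _, v⟩ <;> rcases b with _ | _ | ⟨j, _ | _, w⟩ <;>
    simp_all [GEdge, Vtx.IsUpper]

theorem exists_bridge_of_isSTPath {P : List (Vtx n)} (hP : isSTPath n P) :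
    ∃ i v, (Vtx.mid i false v, Vtx.mid i true v) ∈ P.zip P.tail := by
  obtain ⟨hchain, -, hs, ht⟩ := hP
  obtain ⟨a, b, hab, hedge, ha, hb⟩ := List.IsChain.exists_crossing_pair (p := Vtx.IsUpper)
    hchain hs ht (by simp [Vtx.IsUpper]) trivial
  obtain ⟨i, v, rfl, rfl⟩ := hedge.eq_bridge_of_not_isUpper_of_isUpper ha hb
  exact ⟨i, v, hab⟩

theorem satisfiesClause_of_pathCost_eq_zero {α : Fin n → Bool} {C : Finset (Fin n × Bool)}
    {P : List (Vtx n)} (hP : isSTPath n P) (hα : follows n α P) (hcost : pathCost n C P = 0) :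
    satisfiesClause n α C := by
  obtain ⟨i, v, hbridge⟩ := exists_bridge_of_isSTPath hP
  have hv : v = α i := hα i false v (List.of_mem_zip hbridge).1
  have hmem := cost_eq_zero_iff.mp (pathCost_eq_zero_iff.mp hcost _ _ hbridge) i v rfl rfl
  exact ⟨(i, v), hmem, hv.symm⟩

def crossingPath (α : Fin n → Bool) (i : Fin n) : List (Vtx n) :=
  .s :: (((List.finRange n).take (i + 1)).map (fun k => .mid k false (α k)) ++
    ((List.finRange n).drop i).map (fun k => .mid k true (α k)) ++ [.t])

section crossingPath

variable (α : Fin n → Bool) (i : Fin n)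

theorem mid_mem_crossingPath {k : Fin n} {b v : Bool} :
    Vtx.mid k b v ∈ crossingPath α i ↔ v = α k ∧ (if b then i ≤ k else k ≤ i) := by
  cases b <;> simp [crossingPath, List.mem_take_finRange, List.mem_drop_finRange, -List.map_take,
    -List.map_drop] <;> rw [and_comm, eq_comm]

theorem isChain_crossingPath : (crossingPath α i).IsChain (GEdge n) := by
  have hi := i.isLt
  have hfirst : ((List.finRange n).take (i + 1)).head? = some ⟨0, by omega⟩ := by
    simp [List.head?_eq_getElem?]
  have hcross₁ : ((List.finRange n).take (i + 1)).getLast? = some i := by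
    simp [List.getLast?_take]
  have hcross₂ : ((List.finRange n).drop i).head? = some i := by
    simp [List.head?_drop]
  have hlast : ((List.finRange n).drop i).getLast? = some ⟨n - 1, by omega⟩ := by
    simp [List.getLast?_eq_getElem?]
    omega
  simp only [crossingPath, List.isChain_cons, List.isChain_append, List.isChain_map,
    List.head?_append, List.getLast?_append, List.head?_map, List.getLast?_map, hfirst, hcross₁,
    hcross₂, hlast]
  refine ⟨by simp [GEdge], ⟨⟨((List.isChain_finRange n).take _).imp fun _ _ h => h,
    ((List.isChain_finRange n).drop _).imp fun _ _ h => h, by simp [GEdge]⟩, by simp,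
    by simp [GEdge]⟩⟩

theorem nodup_crossingPath : (crossingPath α i).Nodup := by
  have hinj (b : Bool) : Function.Injective fun k => Vtx.mid k b (α k) := fun _ _ h => by
    injection h
  simp [crossingPath, List.nodup_append, -List.map_take, -List.map_drop, or_imp, forall_and,
    List.Nodup.map (hinj false) (List.nodup_finRange n).take,
    List.Nodup.map (hinj true) (List.nodup_finRange n).drop]

theorem isSTPath_crossingPath : isSTPath n (crossingPath α i) :=
  ⟨isChain_crossingPath α i, nodup_crossingPath α i, rfl,
    by simp [crossingPath, List.getLast?_cons, List.getLast?_append]⟩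

theorem follows_crossingPath : follows n α (crossingPath α i) :=
  fun _ _ _ h => ((mid_mem_crossingPath α i).mp h).1

theorem pathCost_crossingPath {C : Finset (Fin n × Bool)} (h : (i, α i) ∈ C) :
    pathCost n C (crossingPath α i) = 0 := by
  refine pathCost_eq_zero_iff.mpr fun a b hab => cost_eq_zero_iff.mpr ?_
  rintro k v rfl rfl
  obtain ⟨hv, hki⟩ := (mid_mem_crossingPath α i).mp (List.of_mem_zip hab).1
  obtain ⟨-, hik⟩ :=
    (mid_mem_crossingPath α i).mp (List.mem_of_mem_tail (List.of_mem_zip hab).2)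
  obtain rfl : k = i := le_antisymm hki hik
  rwa [hv]

end crossingPath

theorem stmt7_general (n m : ℕ) (C : Fin m → Finset (Fin n × Bool)) (α : Fin n → Bool) (j : Fin m) :
    (∃ P : List (Vtx n), isSTPath n P ∧ follows n α P ∧ pathCost n (C j) P = 0) ↔
      satisfiesClause n α (C j) := by
  constructor
  · rintro ⟨P, hP, hα, hcost⟩
    exact satisfiesClause_of_pathCost_eq_zero hP hα hcost
  · rintro ⟨⟨i, v⟩, hmem, hv⟩
    obtain rfl : α i = v := hv
    exact ⟨crossingPath α i, isSTPath_crossingPath α i, follows_crossingPath α i,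
      pathCost_crossingPath α i hmem⟩

/-- For every assignment `α` and clause index `j`: there exists a directed `s`-`t` path
in `G_φ` that follows `α` and has total cost `0` under `c^j` iff `α` satisfies `C_j`. -/
theorem stmt7 (n m : ℕ) (hn : 1 ≤ n) (hm : 1 ≤ m)
    (C : Fin m → Finset (Fin n × Bool)) (hC : ∀ j, (C j).card ≤ 3)
    (α : Fin n → Bool) (j : Fin m) :
    (∃ P : List (Vtx n), isSTPath n P ∧ follows n α P ∧ pathCost n (C j) P = 0) ↔
      satisfiesClause n α (C j) :=
  stmt7_general n m C α j
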